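/- arXiv:2404.05230 — 2 statements merged into one kernel-verified Lean document; each statement's English description precedes it below -/
import Mathlib

section
/- Let $s\in\mathbb{N}$ and let $\mathbb{S}\subseteq\mathbb{R}^s$ be nonempty and convex. Fix $\lambda\in[0,1]$ and define $v_1^{(\lambda)}(a,b,c):=(a,b,\lambda a+(1-\lambda)c)$, and $v_2(a,b,c):=a$ if $a=b=c$ and otherwise $v_2(a,b,c):=\frac{\|c-a\|}{\|c-a\|+\|b-a\|}c+\left(1-\frac{\|c-a\|}{\|c-a\|+\|b-a\|}\right)b$, and $v^{(\lambda)}:=v_2\circ v_1^{(\lambda)}$. Then for all $(a,b,c)\in\mathbb{S}^3$ one has $\|v^{(\lambda)}(a,b,c)-c\|\le\|b-a\|+\lambda\|c-a\|$ and $\|v^{(\lambda)}(a,b,c)-b\|\le(1-\lambda)\|c-a\|$. -/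
noncomputable section
open Classical in

/-- The map `v₂` from the Euclidean-geometry lemma. -/
def v2 {E : Type*} [NormedAddCommGroup E] [NormedSpace ℝ E] (a b c : E) : E :=
  if a = b ∧ b = c then a
  else (‖c - a‖ / (‖c - a‖ + ‖b - a‖)) • c + (1 - ‖c - a‖ / (‖c - a‖ + ‖b - a‖)) • b

/-- The map `v^{(λ)} = v₂ ∘ v₁^{(λ)}`, where `v₁^{(λ)}(a,b,c) = (a, b, λa + (1-λ)c)`. -/
def vlam {E : Type*} [NormedAddCommGroup E] [NormedSpace ℝ E] (lam : ℝ) (a b c : E) : E :=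
  v2 a b (lam • a + (1 - lam) • c)

end

/-!
`v₂ a b c` is the point of the segment `[b, c]` dividing it in the ratio `‖c - a‖ : ‖b - a‖`.
As `‖c - b‖ ≤ ‖c - a‖ + ‖b - a‖`, it lies within `‖c - a‖` of `b` and within `‖b - a‖` of `c`.
Applied to `c' = λa + (1 - λ)c`, for which `‖c' - a‖ = (1 - λ)‖c - a‖` and `‖c' - c‖ = λ‖c - a‖`,
this gives both bounds, the first after one more triangle inequality through `c'`.
-/

lemma div_add_mul_le {x y z : ℝ} (hx : 0 ≤ x) (hy : 0 ≤ y) (hz : z ≤ x + y) :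
    x / (x + y) * z ≤ x := by
  rcases (add_nonneg hx hy).eq_or_lt with hD | hD
  · simpa [← hD] using hx
  · calc x / (x + y) * z ≤ x / (x + y) * (x + y) := by gcongr
      _ = x := div_mul_cancel₀ x hD.ne'

section v2

variable {E : Type*} [NormedAddCommGroup E] {a b c : E}

lemma norm_sub_add_norm_sub_pos (h : ¬(a = b ∧ b = c)) : 0 < ‖c - a‖ + ‖b - a‖ := by
  by_contra! hD
  have hca : ‖c - a‖ = 0 := by linarith [norm_nonneg (c - a), norm_nonneg (b - a)]
  have hba : ‖b - a‖ = 0 := by linarith [norm_nonneg (c - a), norm_nonneg (b - a)]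
  rw [norm_eq_zero, sub_eq_zero] at hca hba
  exact h ⟨hba.symm, hba.trans hca.symm⟩

lemma norm_sub_le_norm_sub_add_norm_sub' (a b c : E) : ‖c - b‖ ≤ ‖c - a‖ + ‖b - a‖ :=
  norm_sub_rev b a ▸ norm_sub_le_norm_sub_add_norm_sub c a b

variable [NormedSpace ℝ E]

theorem norm_v2_sub_snd_le (a b c : E) : ‖v2 a b c - b‖ ≤ ‖c - a‖ := by
  unfold v2
  split_ifs with h
  · simp [h.1]
  set D := ‖c - a‖ + ‖b - a‖
  calc ‖(‖c - a‖ / D) • c + (1 - ‖c - a‖ / D) • b - b‖ = ‖c - a‖ / D * ‖c - b‖ := by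
        rw [show (‖c - a‖ / D) • c + (1 - ‖c - a‖ / D) • b - b = (‖c - a‖ / D) • (c - b) by
          module, norm_smul, Real.norm_of_nonneg (by positivity)]
    _ ≤ ‖c - a‖ :=
        div_add_mul_le (norm_nonneg _) (norm_nonneg _) (norm_sub_le_norm_sub_add_norm_sub' a b c)

theorem norm_v2_sub_thd_le (a b c : E) : ‖v2 a b c - c‖ ≤ ‖b - a‖ := by
  unfold v2
  split_ifs with h
  · simp [h.1, h.2]
  have hD := norm_sub_add_norm_sub_pos h
  set D := ‖c - a‖ + ‖b - a‖
  have hcompl : 1 - ‖c - a‖ / D = ‖b - a‖ / (‖b - a‖ + ‖c - a‖) := by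
    rw [add_comm, eq_div_iff hD.ne']
    field_simp
    ring
  calc ‖(‖c - a‖ / D) • c + (1 - ‖c - a‖ / D) • b - c‖
        = ‖b - a‖ / (‖b - a‖ + ‖c - a‖) * ‖b - c‖ := by
        rw [show (‖c - a‖ / D) • c + (1 - ‖c - a‖ / D) • b - c = (1 - ‖c - a‖ / D) • (b - c) by
          module, norm_smul, hcompl, Real.norm_of_nonneg (by positivity)]
    _ ≤ ‖b - a‖ :=
        div_add_mul_le (norm_nonneg _) (norm_nonneg _) (norm_sub_le_norm_sub_add_norm_sub' a c b)

end v2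

theorem stmt0_general (s : ℕ)
    (lam : ℝ) (hlam : lam ∈ Set.Icc (0 : ℝ) 1)
    (a b c : EuclideanSpace ℝ (Fin s)) :
    ‖vlam lam a b c - c‖ ≤ ‖b - a‖ + lam * ‖c - a‖ ∧
    ‖vlam lam a b c - b‖ ≤ (1 - lam) * ‖c - a‖ := by
  obtain ⟨h0, h1⟩ := hlam
  set c' := lam • a + (1 - lam) • c
  have hc'a : ‖c' - a‖ = (1 - lam) * ‖c - a‖ := by
    rw [show c' - a = (1 - lam) • (c - a) by module, norm_smul,
      Real.norm_of_nonneg (sub_nonneg.2 h1)]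
  have hc'c : ‖c' - c‖ = lam * ‖c - a‖ := by
    rw [show c' - c = lam • (a - c) by module, norm_smul, Real.norm_of_nonneg h0, norm_sub_rev]
  constructor
  · calc ‖vlam lam a b c - c‖ ≤ ‖v2 a b c' - c'‖ + ‖c' - c‖ :=
          norm_sub_le_norm_sub_add_norm_sub _ _ _
      _ ≤ ‖b - a‖ + lam * ‖c - a‖ := by
          rw [hc'c]
          gcongr
          exact norm_v2_sub_thd_le a b c'
  · exact hc'a ▸ norm_v2_sub_snd_le a b c'

/-- for every `λ ∈ [0,1]` and `(a,b,c) ∈ 𝕊³` (with `𝕊 ⊆ ℝ^s` nonempty convex),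
`‖v^{(λ)}(a,b,c) - c‖ ≤ ‖b-a‖ + λ‖c-a‖` and `‖v^{(λ)}(a,b,c) - b‖ ≤ (1-λ)‖c-a‖`. -/
theorem stmt0 (s : ℕ) (hs : 0 < s) (S : Set (EuclideanSpace ℝ (Fin s)))
    (hS : S.Nonempty) (hconv : Convex ℝ S)
    (lam : ℝ) (hlam : lam ∈ Set.Icc (0 : ℝ) 1)
    (a b c : EuclideanSpace ℝ (Fin s)) (ha : a ∈ S) (hb : b ∈ S) (hc : c ∈ S) :
    ‖vlam lam a b c - c‖ ≤ ‖b - a‖ + lam * ‖c - a‖ ∧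
    ‖vlam lam a b c - b‖ ≤ (1 - lam) * ‖c - a‖ :=
  stmt0_general s lam hlam a b c
end

section
/- Let $\mathcal{X}$ be a metric space with metric $d_{\mathcal{X}}$, $\mathbb{S}\subseteq\mathbb{R}^s$ nonempty, closed, convex, and suppose $\widehat{\theta}:\mathcal{X}\to\mathbb{S}$ is Lipschitz with constant $L_{\widehat{\theta}}$ and $\varepsilon:\mathcal{X}\to[0,\bar{\varepsilon}]$ is Lipschitz with constant $L_{\varepsilon}$. Define $\Gamma(x):=\{\theta\in\mathbb{S}:\|\theta-\widehat{\theta}(x)\|\le\varepsilon(x)\}$. Then for all $x,\widetilde{x}\in\mathcal{X}$ and all $\theta\in\Gamma(x)$ there exists $\widetilde{\theta}\in\Gamma(\widetilde{x})$ with $\|\theta-\widetilde{\theta}\|\le(L_{\widehat{\theta}}+L_{\varepsilon})\,d_{\mathcal{X}}(x,\widetilde{x})$. -/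
/-!
Fix `θ ∈ Γ(x)`. By the triangle inequality, `‖θ - θ̂(x')‖ ≤ ε(x) + L_θ̂ d(x, x') ≤ ε(x') + (L_θ̂ + L_ε) d(x, x')`.
Pulling `θ` radially towards the centre `θ̂(x') ∈ 𝕊` until it reaches the ball of radius `ε(x')` stays in `𝕊` by
convexity and moves `θ` by exactly the excess of its distance over the radius.
-/

open AffineMap

theorem Convex.exists_mem_dist_le_of_dist_le_add {E : Type*} [NormedAddCommGroup E] [NormedSpace ℝ E]
    {S : Set E} (hS : Convex ℝ S) {c θ : E} (hc : c ∈ S) (hθ : θ ∈ S) {r δ : ℝ} (hr : 0 ≤ r)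
    (hδ : 0 ≤ δ) (h : dist θ c ≤ r + δ) : ∃ θ' ∈ S, dist θ' c ≤ r ∧ dist θ θ' ≤ δ := by
  by_cases hθc : dist θ c ≤ r
  · exact ⟨θ, hθ, hθc, by simpa using hδ⟩
  rw [not_le] at hθc
  have hpos : 0 < dist c θ := by rw [dist_comm]; linarith
  set t := r / dist c θ
  have ht0 : 0 ≤ t := by positivity
  have ht1 : t ≤ 1 := (div_le_one hpos).2 (by rw [dist_comm]; exact hθc.le)
  refine ⟨lineMap c θ t, hS.lineMap_mem hc hθ ⟨ht0, ht1⟩, ?_, ?_⟩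
  · rw [dist_lineMap_left, Real.norm_of_nonneg ht0, div_mul_cancel₀ _ hpos.ne']
  · rw [dist_comm, dist_lineMap_right, Real.norm_of_nonneg (sub_nonneg.2 ht1), sub_mul,
      div_mul_cancel₀ _ hpos.ne', one_mul, dist_comm]
    linarith

theorem stmt7_general {X : Type*} [MetricSpace X] (s : ℕ)
    (S : Set (EuclideanSpace ℝ (Fin s)))
    (hSconv : Convex ℝ S)
    (θhat : X → EuclideanSpace ℝ (Fin s)) (hθS : ∀ x, θhat x ∈ S)
    (Lθ : ℝ) (hθLip : ∀ x x' : X, ‖θhat x - θhat x'‖ ≤ Lθ * dist x x')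
    (εbar : ℝ) (ε : X → ℝ) (hε : ∀ x, ε x ∈ Set.Icc 0 εbar)
    (Lε : ℝ) (hεLip : ∀ x x' : X, |ε x - ε x'| ≤ Lε * dist x x') :
    ∀ x x' : X, ∀ θ ∈ {θ ∈ S | ‖θ - θhat x‖ ≤ ε x},
      ∃ θ' ∈ {θ' ∈ S | ‖θ' - θhat x'‖ ≤ ε x'},
        ‖θ - θ'‖ ≤ (Lθ + Lε) * dist x x' := by
  rintro x x' θ ⟨hθ, hθx⟩
  have hθLip_nonneg := (norm_nonneg _).trans (hθLip x x')
  have hεLip_nonneg := (abs_nonneg _).trans (hεLip x x')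
  have hθx' : dist θ (θhat x') ≤ ε x' + (Lθ + Lε) * dist x x' :=
    calc dist θ (θhat x') ≤ dist θ (θhat x) + dist (θhat x) (θhat x') := dist_triangle _ _ _
      _ ≤ ε x + Lθ * dist x x' := by
        rw [dist_eq_norm, dist_eq_norm]; exact add_le_add hθx (hθLip x x')
      _ ≤ ε x' + (Lθ + Lε) * dist x x' := by
        linarith [le_abs_self (ε x - ε x'), hεLip x x']
  obtain ⟨θ', hθ'S, hθ'x', hθθ'⟩ :=
    hSconv.exists_mem_dist_le_of_dist_le_add (hθS x') hθ (hε x').1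
      (by rw [add_mul]; exact add_nonneg hθLip_nonneg hεLip_nonneg) hθx'
  rw [dist_eq_norm] at hθ'x' hθθ'
  exact ⟨θ', ⟨hθ'S, hθ'x'⟩, hθθ'⟩

/-- for Lipschitz center `θ̂` and Lipschitz radius `ε`, the balls-in-`𝕊`
correspondence `Γ(x) = {θ ∈ 𝕊 : ‖θ - θ̂(x)‖ ≤ ε(x)}` satisfies the Lipschitz selection
property with constant `L_θ̂ + L_ε`. -/
theorem stmt7 {X : Type*} [MetricSpace X] (s : ℕ) (hs : 0 < s)
    (S : Set (EuclideanSpace ℝ (Fin s))) (hS : S.Nonempty) (hScl : IsClosed S)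
    (hSconv : Convex ℝ S)
    (θhat : X → EuclideanSpace ℝ (Fin s)) (hθS : ∀ x, θhat x ∈ S)
    (Lθ : ℝ) (hLθ : 0 ≤ Lθ) (hθLip : ∀ x x' : X, ‖θhat x - θhat x'‖ ≤ Lθ * dist x x')
    (εbar : ℝ) (hεbar : 0 < εbar) (ε : X → ℝ) (hε : ∀ x, ε x ∈ Set.Icc 0 εbar)
    (Lε : ℝ) (hLε : 0 ≤ Lε) (hεLip : ∀ x x' : X, |ε x - ε x'| ≤ Lε * dist x x') :
    ∀ x x' : X, ∀ θ ∈ {θ ∈ S | ‖θ - θhat x‖ ≤ ε x},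
      ∃ θ' ∈ {θ' ∈ S | ‖θ' - θhat x'‖ ≤ ε x'},
        ‖θ - θ'‖ ≤ (Lθ + Lε) * dist x x' :=
  stmt7_general s S hSconv θhat hθS Lθ hθLip εbar ε hε Lε hεLip
end
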